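/- For every γ ∈ (0,1), the sequence k ↦ k^γ (k^γ + 2γ(k+1)^{γ−1}) is strictly increasing in k over the positive integers; equivalently, the coefficient G_k = −2k^γ(k^γ + 2γ(k+1)^{γ−1}) is negative and strictly decreasing in k. -/

import Mathlib

open Set Filter Topology

/-!
Write `f(x) = x^γ (x^γ + 2γ (x+1)^{γ-1})`. By the mean value theorem,
`(x+1)^{2γ} - x^{2γ} = 2γ c^γ c^{γ-1}` for some `c ∈ (x, x+1)`, and for `0 ≤ γ ≤ 1` this is at
least `2γ x^γ (x+1)^{γ-1}`. Hence `f(x) ≤ (x+1)^{2γ} < f(x+1)`.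
-/

namespace Real

variable {γ x : ℝ}

theorem two_mul_mul_rpow_mul_rpow_le_rpow_sub_rpow (hγ0 : 0 ≤ γ) (hγ1 : γ ≤ 1) (hx : 0 ≤ x) :
    2 * γ * (x ^ γ * (x + 1) ^ (γ - 1)) ≤ (x + 1) ^ (2 * γ) - x ^ (2 * γ) := by
  obtain ⟨c, ⟨hxc, hcx⟩, hc⟩ := exists_hasDerivAt_eq_slope (fun u : ℝ => u ^ (2 * γ))
    (fun u => 2 * γ * u ^ (2 * γ - 1)) (lt_add_one x)
    ((continuous_rpow_const (by positivity)).continuousOn)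
    (fun u hu => hasDerivAt_rpow_const (Or.inl (hx.trans_lt hu.1).ne'))
  have hc0 : 0 < c := hx.trans_lt hxc
  have hsplit : c ^ (2 * γ - 1) = c ^ γ * c ^ (γ - 1) := by
    rw [← rpow_add hc0]; ring_nf
  have hle : x ^ γ * (x + 1) ^ (γ - 1) ≤ c ^ γ * c ^ (γ - 1) :=
    mul_le_mul (rpow_le_rpow hx hxc.le hγ0)
      (rpow_le_rpow_of_nonpos hc0 hcx.le (by linarith)) (by positivity) (by positivity)
  rw [add_sub_cancel_left, div_one, hsplit] at hc
  rw [← hc]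
  gcongr

end Real

/-- The sequence `k ↦ k^γ (k^γ + 2γ(k+1)^{γ-1})`, so that `G_k = -2 * nagWeight γ k`. -/
noncomputable def nagWeight (γ x : ℝ) : ℝ :=
  x ^ γ * (x ^ γ + 2 * γ * (x + 1) ^ (γ - 1))

namespace nagWeight

variable {γ x : ℝ}

theorem pos (hγ : 0 ≤ γ) (hx : 0 < x) : 0 < nagWeight γ x := by
  unfold nagWeight
  positivity

theorem eq_rpow_two_mul_add (hx : 0 ≤ x) :
    nagWeight γ x = x ^ (2 * γ) + 2 * γ * (x ^ γ * (x + 1) ^ (γ - 1)) := by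
  rw [nagWeight, mul_comm 2 γ, Real.rpow_mul hx, Real.rpow_two]
  ring

theorem lt_add_one (hγ0 : 0 < γ) (hγ1 : γ ≤ 1) (hx : 0 ≤ x) :
    nagWeight γ x < nagWeight γ (x + 1) := by
  have hgap := Real.two_mul_mul_rpow_mul_rpow_le_rpow_sub_rpow hγ0.le hγ1 hx
  have hpos : 0 < 2 * γ * ((x + 1) ^ γ * (x + 1 + 1) ^ (γ - 1)) := by positivity
  rw [eq_rpow_two_mul_add hx, eq_rpow_two_mul_add (by positivity)]
  linarith

end nagWeight

theorem coeff_G_monotone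
    (γ : ℝ) (hγ : γ ∈ Set.Ioo (0 : ℝ) 1) :
    (∀ k : ℕ, 1 ≤ k →
      (k : ℝ) ^ γ * ((k : ℝ) ^ γ + 2 * γ * ((k : ℝ) + 1) ^ (γ - 1)) <
        ((k : ℝ) + 1) ^ γ * (((k : ℝ) + 1) ^ γ + 2 * γ * ((k : ℝ) + 2) ^ (γ - 1))) ∧
    (∀ k : ℕ, 1 ≤ k →
      -2 * (k : ℝ) ^ γ * ((k : ℝ) ^ γ + 2 * γ * ((k : ℝ) + 1) ^ (γ - 1)) < 0) ∧
    (∀ k : ℕ, 1 ≤ k →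
      -2 * ((k : ℝ) + 1) ^ γ * (((k : ℝ) + 1) ^ γ + 2 * γ * ((k : ℝ) + 2) ^ (γ - 1)) <
        -2 * (k : ℝ) ^ γ * ((k : ℝ) ^ γ + 2 * γ * ((k : ℝ) + 1) ^ (γ - 1))) := by
  obtain ⟨hγ0, hγ1⟩ := hγ
  have hmono (k : ℕ) : nagWeight γ k < nagWeight γ (k + 1) :=
    nagWeight.lt_add_one hγ0 hγ1.le k.cast_nonneg
  have hpos (k : ℕ) (hk : 1 ≤ k) : 0 < nagWeight γ k :=
    nagWeight.pos hγ0.le (by exact_mod_cast hk)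
  simp only [nagWeight, add_assoc, one_add_one_eq_two] at hmono hpos
  refine ⟨fun k _ => hmono k, fun k hk => ?_, fun k _ => ?_⟩
  · linarith [hpos k hk]
  · linarith [hmono k]
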